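/- Iteration lemma, part (i) (Lemma 2.5(i)). Let {a_i}_{i=0}^∞ be a sequence of nonnegative real numbers, let k ≥ 0 be an integer, and define A_i^k = max{a_i, a_{i+1}, …, a_{i+k}} for i = 0, 1, …. Let D ≥ 0 be a constant. If a_{i+1+k} ≤ (1/8) A_i^k + D for all i = 0, 1, …, then for every i ≥ k+1: A_i^k ≤ (1/8)^{⌊i/(k+1)⌋} · max{A_0^k, A_1^k, …, A_k^k} + ((8+k)/7) D. -/

import Mathlib

/-!
Every entry `a (i + j)`, `j ≤ k`, of the window `A_i^k` is `a (m + 1 + k)` for the index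
`m = i + j - (k + 1)`, which lies at most one block of length `k + 1` before `i`. So the hypothesis
bounds it by `q A_m^k + D`, and strong induction on `i` shows that each block costs a factor `q` on
the initial maximum, while the additive error stays below any `C` with `q C + D ≤ C`.
-/

noncomputable section

/-- `A_i^k = max{a_i, a_{i+1}, …, a_{i+k}}`. -/
def Amax (a : ℕ → ℝ) (k i : ℕ) : ℝ :=
  (Finset.range (k + 1)).sup' Finset.nonempty_range_add_one fun j => a (i + j)

theorem Nat.div_le_div_add_one {i m n : ℕ} (h : i ≤ m + n) : i / n ≤ m / n + 1 := by
  rcases Nat.eq_zero_or_pos n with rfl | hn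
  · simp
  · calc i / n ≤ (m + n) / n := Nat.div_le_div_right h
      _ = m / n + 1 := Nat.add_div_right m hn

section

variable (a : ℕ → ℝ) (k : ℕ)

theorem le_Amax {i j : ℕ} (hj : j ≤ k) : a (i + j) ≤ Amax a k i :=
  Finset.le_sup' (fun j => a (i + j)) (Finset.mem_range.mpr (Nat.lt_succ_of_le hj))

theorem Amax_le {i : ℕ} {b : ℝ} (h : ∀ j ≤ k, a (i + j) ≤ b) : Amax a k i ≤ b :=
  Finset.sup'_le _ _ fun j hj => h j (Nat.le_of_lt_succ (Finset.mem_range.mp hj))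

theorem Amax_nonneg (ha : ∀ i, 0 ≤ a i) (i : ℕ) : 0 ≤ Amax a k i :=
  (ha (i + 0)).trans (le_Amax a k (Nat.zero_le k))

theorem Amax_le_pow_mul_add {q C D M : ℝ} (hq0 : 0 ≤ q) (hq1 : q ≤ 1) (hM : 0 ≤ M)
    (hC : q * C + D ≤ C) (hiter : ∀ i, a (i + 1 + k) ≤ q * Amax a k i + D)
    (hinit : ∀ i < k + 1, Amax a k i ≤ M + C) (i : ℕ) :
    Amax a k i ≤ q ^ (i / (k + 1)) * M + C := by
  induction i using Nat.strong_induction_on with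
  | _ i ih =>
    rcases lt_or_ge i (k + 1) with hi | hi
    · simpa [Nat.div_eq_of_lt hi] using hinit i hi
    refine Amax_le a k fun j hj => ?_
    set m := i + j - (k + 1)
    have hm : m + 1 + k = i + j := by omega
    have hpow : q * q ^ (m / (k + 1)) ≤ q ^ (i / (k + 1)) := by
      rw [← pow_succ']
      exact pow_le_pow_of_le_one hq0 hq1 (Nat.div_le_div_add_one (by omega))
    calc a (i + j) = a (m + 1 + k) := by rw [hm]
      _ ≤ q * Amax a k m + D := hiter m
      _ ≤ q * (q ^ (m / (k + 1)) * M + C) + D := by gcongr; exact ih m (by omega)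
      _ = q * q ^ (m / (k + 1)) * M + (q * C + D) := by ring
      _ ≤ q ^ (i / (k + 1)) * M + C := by gcongr

end

/-- Iteration lemma, part (i) (Lemma 2.5(i)). -/
theorem iteration_lemma_part_i
    (a : ℕ → ℝ) (ha : ∀ i, 0 ≤ a i) (k : ℕ) (D : ℝ) (hD : 0 ≤ D)
    (hiter : ∀ i, a (i + 1 + k) ≤ (1 / 8) * Amax a k i + D) :
    ∀ i, k + 1 ≤ i →
      Amax a k i ≤
        (1 / 8 : ℝ) ^ (i / (k + 1)) *
            ((Finset.range (k + 1)).sup' Finset.nonempty_range_add_one fun j => Amax a k j)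
          + (8 + k : ℝ) / 7 * D := by
  intro i _
  have hinit : ∀ i < k + 1, Amax a k i ≤
      (Finset.range (k + 1)).sup' Finset.nonempty_range_add_one (fun j => Amax a k j) := fun i hi =>
    Finset.le_sup' (fun j => Amax a k j) (Finset.mem_range.mpr hi)
  have hM : 0 ≤ (Finset.range (k + 1)).sup' Finset.nonempty_range_add_one fun j => Amax a k j :=
    (Amax_nonneg a k ha 0).trans (hinit 0 k.succ_pos)
  have hC : 0 ≤ (8 + k : ℝ) / 7 * D := by positivity
  refine Amax_le_pow_mul_add a k (by norm_num) (by norm_num) hM ?_ hiter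
    (fun i hi => (hinit i hi).trans (le_add_of_nonneg_right hC)) i
  nlinarith [mul_nonneg k.cast_nonneg hD]
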